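/- For continuous maps f, g : X → Y, the m-homotopic distance D_m(f, g) equals secat_m(Π_1), where Π_1 : P(f,g) → X is the pullback of the free path space fibration π_Y : Y^I → Y × Y along the map (f, g) : X → Y × Y. -/

import Mathlib

universe u

section OldCWComplex
open CategoryTheory

namespace RelativeCWComplex

/-- The `n`-sphere, in `ℝⁿ⁺¹`. -/
noncomputable def sphere (n : ℤ) : TopCat.{u} :=
  TopCat.of (ULift (Metric.sphere (0 : EuclideanSpace ℝ (Fin (n + 1).toNat)) 1))

/-- The `n`-disk, in `ℝⁿ`. -/
noncomputable def disk (n : ℤ) : TopCat.{u} :=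
  TopCat.of (ULift (Metric.closedBall (0 : EuclideanSpace ℝ (Fin n.toNat)) 1))

/-- The inclusion of the `n`-sphere into the `(n + 1)`-disk. -/
noncomputable def sphereInclusion (n : ℤ) : sphere.{u} n ⟶ disk.{u} (n + 1) :=
  TopCat.ofHom ⟨fun x => ⟨⟨x.down.1, Metric.sphere_subset_closedBall x.down.2⟩⟩,
    continuous_uliftUp.comp ((continuous_subtype_val.comp continuous_uliftDown).subtype_mk _)⟩

/-- `X'` is obtained from `X` by attaching generalized cells `f : S ⟶ D`. -/
structure AttachGeneralizedCells {S D : TopCat.{u}} (f : S ⟶ D) (X X' : TopCat.{u}) where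
  cells : Type u
  attachMaps : cells → (S ⟶ X)
  iso_pushout : X' ≅ Limits.pushout (Limits.Sigma.desc attachMaps) (Limits.Sigma.map fun _ ↦ f)

/-- `X'` is obtained from `X` by attaching `(n + 1)`-disks. -/
def AttachCells (n : ℤ) := AttachGeneralizedCells (sphereInclusion.{u} n)

end RelativeCWComplex

/-- Relative CW complex (old Mathlib definition). -/
structure RelativeCWComplex where
  sk : ℕ → TopCat.{u}
  attachCells (n : ℕ) : RelativeCWComplex.AttachCells.{u} ((n : ℤ) - 1) (sk n) (sk (n + 1))

/-- CW complex (old Mathlib definition). -/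
structure CWComplex extends RelativeCWComplex.{u} where
  isEmpty_sk_zero : IsEmpty (sk 0)

namespace RelativeCWComplex

/-- Inclusion `X ⟶ X'` for an attaching of cells. -/
noncomputable def AttachCells.inclusion {X X' : TopCat.{u}} {n : ℤ} (att : AttachCells.{u} n X X') :
    X ⟶ X' :=
  Limits.pushout.inl _ _ ≫ att.iso_pushout.inv

/-- Skeleton inclusion. -/
noncomputable def skInclusion (X : RelativeCWComplex.{u}) (n : ℕ) : X.sk n ⟶ X.sk (n + 1) :=
  (X.attachCells n).inclusion

/-- The topological space of a relative CW complex. -/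
noncomputable def toTopCat (X : RelativeCWComplex.{u}) : TopCat.{u} :=
  Limits.colimit (Functor.ofSequence X.skInclusion)

end RelativeCWComplex

end OldCWComplex

/-- The underlying topological space of a CW complex. -/
abbrev CWSpace (K : CWComplex.{u}) : Type u := K.toRelativeCWComplex.toTopCat

/-- A CW complex has dimension at most `m` if it has no cells of dimension `> m`. -/
def CWDimLE (K : CWComplex.{u}) (m : ℕ) : Prop :=
  ∀ n : ℕ, m < n →
    IsEmpty (RelativeCWComplex.AttachGeneralizedCells.cells (K.toRelativeCWComplex.attachCells n))

/-- Hurewicz fibration: the homotopy lifting property with respect to all spaces. -/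
def IsFibration {E B : Type u} [TopologicalSpace E] [TopologicalSpace B] (p : C(E, B)) : Prop :=
  ∀ (X : Type u) [TopologicalSpace X] (f : C(X, E)) (H : C(X × unitInterval, B)),
    (∀ x, H (x, 0) = p (f x)) →
    ∃ H' : C(X × unitInterval, E), (∀ z, p (H' z) = H z) ∧ (∀ x, H' (x, 0) = f x)

/-- The inclusion of a subset as a continuous map. -/
def inclMap {X : Type u} [TopologicalSpace X] (U : Set X) : C(U, X) :=
  ⟨Subtype.val, continuous_subtype_val⟩

/-- Property `A_{m,p}`: every map into `U` from an `m`-dimensional CW complex lifts through `p`. -/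
def LiftingProp {E B : Type u} [TopologicalSpace E] [TopologicalSpace B]
    (p : C(E, B)) (m : ℕ) (U : Set B) : Prop :=
  ∀ K : CWComplex.{u}, CWDimLE K m → ∀ φ : C(CWSpace K, U),
    ∃ s : C(CWSpace K, E), ∀ x, p (s x) = (φ x : B)

/-- The `m`-sectional category of `p`, valued in `ℕ∞` (`⊤` if no finite cover exists). -/
noncomputable def secatm {E B : Type u} [TopologicalSpace E] [TopologicalSpace B]
    (p : C(E, B)) (m : ℕ) : ℕ∞ :=
  sInf ((fun n : ℕ => (n : ℕ∞)) ''
    {k : ℕ | ∃ U : Fin (k + 1) → Set B, (∀ i, IsOpen (U i)) ∧ (⋃ i, U i) = Set.univ ∧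
      ∀ i, LiftingProp p m (U i)})

/-- The classical sectional category. -/
noncomputable def secat {E B : Type u} [TopologicalSpace E] [TopologicalSpace B]
    (p : C(E, B)) : ℕ∞ :=
  sInf ((fun n : ℕ => (n : ℕ∞)) ''
    {k : ℕ | ∃ U : Fin (k + 1) → Set B, (∀ i, IsOpen (U i)) ∧ (⋃ i, U i) = Set.univ ∧
      ∀ i, ∃ s : C((U i : Set B), E), ∀ x, p (s x) = (x : B)})

/-- Property `B_m`. -/
def NullProp {X : Type u} [TopologicalSpace X] (m : ℕ) (U : Set X) : Prop :=
  ∀ K : CWComplex.{u}, CWDimLE K m → ∀ φ : C(CWSpace K, U),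
    ((inclMap U).comp φ).Nullhomotopic

/-- The `m`-dimensional Lusternik–Schnirelmann category. -/
noncomputable def catm (X : Type u) [TopologicalSpace X] (m : ℕ) : ℕ∞ :=
  sInf ((fun n : ℕ => (n : ℕ∞)) ''
    {k : ℕ | ∃ U : Fin (k + 1) → Set X, (∀ i, IsOpen (U i)) ∧ (⋃ i, U i) = Set.univ ∧
      ∀ i, NullProp m (U i)})

/-- Classical (normalized) LS category. -/
noncomputable def catLS (X : Type u) [TopologicalSpace X] : ℕ∞ :=
  sInf ((fun n : ℕ => (n : ℕ∞)) ''
    {k : ℕ | ∃ U : Fin (k + 1) → Set X, (∀ i, IsOpen (U i)) ∧ (⋃ i, U i) = Set.univ ∧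
      ∀ i, (inclMap (U i)).Nullhomotopic})

/-- Property `C_{m,f}`. -/
def NullPropMap {X Y : Type u} [TopologicalSpace X] [TopologicalSpace Y]
    (f : C(X, Y)) (m : ℕ) (U : Set X) : Prop :=
  ∀ K : CWComplex.{u}, CWDimLE K m → ∀ φ : C(CWSpace K, U),
    ((f.comp (inclMap U)).comp φ).Nullhomotopic

/-- The `m`-dimensional LS category of a map. -/
noncomputable def catmMap {X Y : Type u} [TopologicalSpace X] [TopologicalSpace Y]
    (f : C(X, Y)) (m : ℕ) : ℕ∞ :=
  sInf ((fun n : ℕ => (n : ℕ∞)) ''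
    {k : ℕ | ∃ U : Fin (k + 1) → Set X, (∀ i, IsOpen (U i)) ∧ (⋃ i, U i) = Set.univ ∧
      ∀ i, NullPropMap f m (U i)})

/-- Property `D_{m,f,g}`. -/
def DistProp {X Y : Type u} [TopologicalSpace X] [TopologicalSpace Y]
    (f g : C(X, Y)) (m : ℕ) (U : Set X) : Prop :=
  ∀ K : CWComplex.{u}, CWDimLE K m → ∀ φ : C(CWSpace K, U),
    ((f.comp (inclMap U)).comp φ).Homotopic ((g.comp (inclMap U)).comp φ)

/-- The `m`-homotopic distance. -/
noncomputable def homDistm {X Y : Type u} [TopologicalSpace X] [TopologicalSpace Y]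
    (f g : C(X, Y)) (m : ℕ) : ℕ∞ :=
  sInf ((fun n : ℕ => (n : ℕ∞)) ''
    {k : ℕ | ∃ U : Fin (k + 1) → Set X, (∀ i, IsOpen (U i)) ∧ (⋃ i, U i) = Set.univ ∧
      ∀ i, DistProp f g m (U i)})

/-- `D_m(f,g) = secat_m(Π₁)`, where `Π₁` is the pullback of the free path space fibration
`π_Y : Y^I → Y × Y` along `(f, g)`. -/
theorem stmt15 {X Y : Type u} [TopologicalSpace X] [TopologicalSpace Y]
    (f g : C(X, Y)) (m : ℕ) :
    homDistm f g m =
      secatm (⟨fun z => z.1.1, by exact continuous_fst.comp continuous_subtype_val⟩ :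
        C({z : X × C(unitInterval, Y) // z.2 0 = f z.1 ∧ z.2 1 = g z.1}, X)) m := by
  set p : C({z : X × C(unitInterval, Y) // z.2 0 = f z.1 ∧ z.2 1 = g z.1}, X) :=
    ⟨fun z => z.1.1, by exact continuous_fst.comp continuous_subtype_val⟩ with hp
  have key : ∀ U : Set X, DistProp f g m U ↔ LiftingProp p m U := by
    intro U
    constructor
    · intro hD K hK φ
      obtain ⟨H⟩ := hD K hK φ
      set Hc : C(CWSpace K, C(unitInterval, Y)) :=
        (H.toContinuousMap.comp ⟨Prod.swap, continuous_swap⟩).curry with hHc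
      refine ⟨⟨fun x => ⟨((φ x : X), Hc x), ?_, ?_⟩, ?_⟩, fun x => rfl⟩
      · simpa [hHc, inclMap] using H.apply_zero x
      · simpa [hHc, inclMap] using H.apply_one x
      · apply Continuous.subtype_mk
        exact (continuous_subtype_val.comp φ.continuous).prodMk
          Hc.continuous
    · intro hL K hK φ
      obtain ⟨s, hs⟩ := hL K hK φ
      refine ⟨⟨⟨fun q => ((s q.2).1.2 : C(unitInterval, Y)) q.1, ?_⟩, ?_, ?_⟩⟩
      · exact ContinuousEval.continuous_eval.comp
          (((continuous_snd.comp continuous_subtype_val).comp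
            (s.continuous.comp continuous_snd)).prodMk continuous_fst)
      · intro x
        have h1 := (s x).2.1
        have h2 : (s x).1.1 = (φ x : X) := hs x
        simp only [ContinuousMap.coe_mk]
        rw [h1, h2]; rfl
      · intro x
        have h1 := (s x).2.2
        have h2 : (s x).1.1 = (φ x : X) := hs x
        simp only [ContinuousMap.coe_mk]
        rw [h1, h2]; rfl
  have hset : {k : ℕ | ∃ U : Fin (k + 1) → Set X, (∀ i, IsOpen (U i)) ∧
      (⋃ i, U i) = Set.univ ∧ ∀ i, DistProp f g m (U i)} =
      {k : ℕ | ∃ U : Fin (k + 1) → Set X, (∀ i, IsOpen (U i)) ∧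
      (⋃ i, U i) = Set.univ ∧ ∀ i, LiftingProp p m (U i)} := by
    ext k
    constructor
    · rintro ⟨U, h1, h2, h3⟩
      exact ⟨U, h1, h2, fun i => (key (U i)).mp (h3 i)⟩
    · rintro ⟨U, h1, h2, h3⟩
      exact ⟨U, h1, h2, fun i => (key (U i)).mpr (h3 i)⟩
  unfold homDistm secatm
  rw [hset]
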